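/- arXiv:1401.5543 — 8 statements merged into one kernel-verified Lean document; each statement's English description precedes it below -/
import Mathlib

section
/- (KAT bound) Let (Ω, P) be a probability space and let A_1, …, A_N be measurable events (N ≥ 1) with P(A_i) > 0 for every i. Then P(⋃_{i=1}^N A_i) ≥ Σ_{i=1}^N [ 1/⌊γ_i/α_i⌋ − (γ_i/α_i − ⌊γ_i/α_i⌋) / ((1 + ⌊γ_i/α_i⌋)·⌊γ_i/α_i⌋) ] · α_i. -/
/-!
Let `c ω` be the number of events containing `ω`. Then `P(⋃ i, A i) = ∑ i ∫_{A i} 1/c`, while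
`∫_{A i} 1 = α i` and `∫_{A i} c = γ i`. On the integers `n ≥ 1`, the convex function `n ↦ 1/n`
lies above its chord through any two consecutive integers `k, k + 1`; this chord is affine, so its
integral over `A i` only involves `α i` and `γ i`, and with `k = ⌊γ i / α i⌋` it is the `i`-th
term of the bound.
-/

open MeasureTheory Finset

noncomputable def coverCount {ι Ω : Type*} [Fintype ι] (A : ι → Set Ω) (ω : Ω) : ℕ :=
  open Classical in #{i | ω ∈ A i}

section

variable {ι Ω : Type*} [Fintype ι] {A : ι → Set Ω}

theorem coverCount_eq_sum_indicator (A : ι → Set Ω) (ω : Ω) :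
    (coverCount A ω : ℝ) = ∑ i, (A i).indicator 1 ω := by
  classical
  simp [coverCount, Set.indicator_apply, Finset.sum_boole]

theorem one_le_coverCount {ω : Ω} {i : ι} (h : ω ∈ A i) : 1 ≤ coverCount A ω := by
  classical
  exact Finset.card_pos.2 ⟨i, by simpa using h⟩

variable [MeasurableSpace Ω] {μ : Measure Ω}

theorem measurable_coverCount (hA : ∀ i, MeasurableSet (A i)) :
    Measurable fun ω => (coverCount A ω : ℝ) := by
  simp_rw [coverCount_eq_sum_indicator]
  exact Finset.measurable_sum _ fun i _ => measurable_const.indicator (hA i)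

theorem integrable_coverCount [IsFiniteMeasure μ] (hA : ∀ i, MeasurableSet (A i)) :
    Integrable (fun ω => (coverCount A ω : ℝ)) μ := by
  simp_rw [coverCount_eq_sum_indicator]
  exact integrable_finsetSum _ fun i _ => (integrable_const 1).indicator (hA i)

theorem integrable_inv_coverCount [IsFiniteMeasure μ] (hA : ∀ i, MeasurableSet (A i)) :
    Integrable (fun ω => (coverCount A ω : ℝ)⁻¹) μ :=
  Integrable.of_bound (measurable_coverCount hA).inv.aestronglyMeasurable 1
    (ae_of_all _ fun ω => by simpa using Nat.cast_inv_le_one (coverCount A ω))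

theorem setIntegral_coverCount [IsFiniteMeasure μ] (hA : ∀ i, MeasurableSet (A i)) (i : ι) :
    ∫ ω in A i, (coverCount A ω : ℝ) ∂μ = ∑ j, μ.real (A i ∩ A j) := by
  simp_rw [coverCount_eq_sum_indicator]
  rw [integral_finsetSum _ fun j _ => (integrable_const 1 |>.indicator (hA j) |>.integrableOn :
    IntegrableOn ((A j).indicator (1 : Ω → ℝ)) (A i) μ)]
  simp_rw [setIntegral_indicator (hA _)]
  simp

theorem sum_setIntegral_eq_integral_coverCount_mul (hA : ∀ i, MeasurableSet (A i))
    {f : Ω → ℝ} (hf : Integrable f μ) :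
    ∑ i, ∫ ω in A i, f ω ∂μ = ∫ ω, coverCount A ω * f ω ∂μ := by
  simp_rw [← integral_indicator (hA _)]
  rw [← integral_finsetSum _ fun i _ => hf.indicator (hA i)]
  congr 1 with ω
  rw [coverCount_eq_sum_indicator, Finset.sum_mul]
  exact Finset.sum_congr rfl fun i _ => by by_cases h : ω ∈ A i <;> simp [h]

theorem sum_setIntegral_inv_coverCount [IsFiniteMeasure μ] (hA : ∀ i, MeasurableSet (A i)) :
    ∑ i, ∫ ω in A i, (coverCount A ω : ℝ)⁻¹ ∂μ = μ.real (⋃ i, A i) := by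
  rw [sum_setIntegral_eq_integral_coverCount_mul hA (integrable_inv_coverCount hA),
    ← integral_indicator_one (MeasurableSet.iUnion hA)]
  congr 1 with ω
  by_cases h : ω ∈ ⋃ i, A i
  · obtain ⟨i, hi⟩ := Set.mem_iUnion.1 h
    have : (coverCount A ω : ℝ) ≠ 0 := by have := one_le_coverCount hi; positivity
    rw [Set.indicator_of_mem h, Pi.one_apply, mul_inv_cancel₀ this]
  · rw [Set.indicator_of_notMem h, coverCount_eq_sum_indicator]
    simp_all

end

/-- The chord of `x ↦ 1 / x` through the points `k` and `k + 1`. -/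
noncomputable def harmonicChord (k x : ℝ) : ℝ :=
  1 / k - (x - k) / ((1 + k) * k)

theorem harmonicChord_le_inv {k : ℤ} {n : ℕ} (hk : 1 ≤ k) (hn : 1 ≤ n) :
    harmonicChord k n ≤ (n : ℝ)⁻¹ := by
  have hgap : 0 ≤ ((n : ℝ) - k) * ((n : ℝ) - (k + 1)) := by
    rcases le_or_gt (n : ℤ) k with h | h
    · have : (n : ℝ) ≤ k := by exact_mod_cast h
      nlinarith
    · have : (k : ℝ) + 1 ≤ n := by exact_mod_cast h
      nlinarith
  have hk' : (1 : ℝ) ≤ k := by exact_mod_cast hk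
  have hn' : (1 : ℝ) ≤ n := by exact_mod_cast hn
  have key : (n : ℝ)⁻¹ - harmonicChord k n = (n - k) * (n - (k + 1)) / (n * k * (k + 1)) := by
    unfold harmonicChord
    field_simp
    ring
  have := div_nonneg hgap (by positivity : (0 : ℝ) ≤ n * k * (k + 1))
  linarith

section

variable {Ω : Type*} [MeasurableSpace Ω] {μ : Measure Ω} [IsFiniteMeasure μ]

theorem MeasureTheory.Integrable.harmonicChord {f : Ω → ℝ} (hf : Integrable f μ) (k : ℝ) :
    Integrable (fun ω => harmonicChord k (f ω)) μ :=
  (integrable_const _).sub ((hf.sub (integrable_const k)).div_const _)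

theorem setIntegral_harmonicChord {s : Set Ω} {f : Ω → ℝ}
    (hf : IntegrableOn f s μ) (hs : μ.real s ≠ 0) (k : ℝ) :
    ∫ ω in s, harmonicChord k (f ω) ∂μ =
      harmonicChord k ((∫ ω in s, f ω ∂μ) / μ.real s) * μ.real s := by
  have hf' : IntegrableOn (fun ω => (f ω - k) / ((1 + k) * k)) s μ :=
    (hf.sub (integrable_const k)).div_const _
  unfold harmonicChord
  rw [integral_sub (integrable_const _) hf', integral_div ((1 + k) * k) fun ω => f ω - k,
    integral_sub hf (integrable_const _)]
  simp only [integral_const, measureReal_restrict_apply MeasurableSet.univ, Set.univ_inter,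
    smul_eq_mul]
  field_simp

end

theorem kat_bound_general {Ω : Type*} [MeasurableSpace Ω] (P : Measure Ω)
    [IsProbabilityMeasure P] (N : ℕ)
    (A : Fin N → Set Ω) (hA : ∀ i, MeasurableSet (A i))
    (hpos : ∀ i, 0 < P (A i))
    (α γ : Fin N → ℝ)
    (hα : ∀ i, α i = (P (A i)).toReal)
    (hγ : ∀ i, γ i = ∑ j : Fin N, (P (A i ∩ A j)).toReal) :
    (P (⋃ i, A i)).toReal ≥
      ∑ i : Fin N, (1 / (⌊γ i / α i⌋ : ℝ) -
        (γ i / α i - (⌊γ i / α i⌋ : ℝ)) /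
          ((1 + (⌊γ i / α i⌋ : ℝ)) * (⌊γ i / α i⌋ : ℝ))) * α i := by
  have hα_pos (i : Fin N) : 0 < α i := by
    rw [hα]
    exact ENNReal.toReal_pos (hpos i).ne' (measure_ne_top P _)
  have hαγ (i : Fin N) : α i ≤ γ i := by
    have := Finset.single_le_sum (f := fun j => (P (A i ∩ A j)).toReal)
      (fun j _ => ENNReal.toReal_nonneg) (Finset.mem_univ i)
    rwa [Set.inter_self, ← hα, ← hγ] at this
  have hfloor (i : Fin N) : 1 ≤ ⌊γ i / α i⌋ :=
    Int.le_floor.2 (by exact_mod_cast (one_le_div (hα_pos i)).2 (hαγ i))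
  have hcount := integrable_coverCount (μ := P) hA
  calc ∑ i, harmonicChord ⌊γ i / α i⌋ (γ i / α i) * α i
      = ∑ i, ∫ ω in A i, harmonicChord ⌊γ i / α i⌋ (coverCount A ω) ∂P := by
        refine Finset.sum_congr rfl fun i _ => ?_
        rw [setIntegral_harmonicChord hcount.integrableOn ((hα i ▸ hα_pos i).ne'),
          setIntegral_coverCount hA]
        simp only [hγ, hα, measureReal_def]
    _ ≤ ∑ i, ∫ ω in A i, (coverCount A ω : ℝ)⁻¹ ∂P := by
        refine Finset.sum_le_sum fun i _ => setIntegral_mono_on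
          (hcount.harmonicChord _).integrableOn (integrable_inv_coverCount hA).integrableOn (hA i)
          fun ω hω => harmonicChord_le_inv (hfloor i) (one_le_coverCount hω)
    _ = (P (⋃ i, A i)).toReal := sum_setIntegral_inv_coverCount hA

/-- The KAT bound: with `α i = P(A i) > 0` and `γ i = ∑ j, P(A i ∩ A j)` (including `j = i`),
`P(⋃ i, A i) ≥ ∑ i [1/⌊γ i/α i⌋ − (γ i/α i − ⌊γ i/α i⌋)/((1+⌊γ i/α i⌋)⌊γ i/α i⌋)] α i`. -/
theorem kat_bound {Ω : Type*} [MeasurableSpace Ω] (P : Measure Ω)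
    [IsProbabilityMeasure P] (N : ℕ) (hN : 1 ≤ N)
    (A : Fin N → Set Ω) (hA : ∀ i, MeasurableSet (A i))
    (hpos : ∀ i, 0 < P (A i))
    (α γ : Fin N → ℝ)
    (hα : ∀ i, α i = (P (A i)).toReal)
    (hγ : ∀ i, γ i = ∑ j : Fin N, (P (A i ∩ A j)).toReal) :
    (P (⋃ i, A i)).toReal ≥
      ∑ i : Fin N, (1 / (⌊γ i / α i⌋ : ℝ) -
        (γ i / α i - (⌊γ i / α i⌋ : ℝ)) /
          ((1 + (⌊γ i / α i⌋ : ℝ)) * (⌊γ i / α i⌋ : ℝ))) * α i :=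
  kat_bound_general P N A hA hpos α γ hα hγ
end

section
/- (Gap between the new analytical bound and the KAT bound) Let N ≥ 2 and let α_1,…,α_N, γ_1,…,γ_N be real numbers with α_i > 0 and α_i ≤ γ_i ≤ N·α_i for all i. Let δ = max(0, max_i (γ_i − (N−1)α_i)), and assume δ < α_i and δ ≤ (γ_i − α_i)/(N−1) for all i. Set α_i' = α_i − δ, γ_i' = γ_i − N·δ, ℓ_KAT = Σ_{i=1}^N [1/⌊γ_i/α_i⌋ − (γ_i/α_i − ⌊γ_i/α_i⌋)/((1+⌊γ_i/α_i⌋)⌊γ_i/α_i⌋)]·α_i, and ℓ_YAT = δ + Σ_{i=1}^N [1/χ(γ_i'/α_i') − (γ_i'/α_i' − χ(γ_i'/α_i'))/((1+χ(γ_i'/α_i'))·χ(γ_i'/α_i'))]·α_i'. Then ℓ_YAT − ℓ_KAT ≥ ( Σ_{i=1}^N (N − χ(γ_i/α_i))·(N − χ(γ_i/α_i) − 1) / ( χ(γ_i/α_i)·(χ(γ_i/α_i) + 1) ) ) · δ/N. -/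
open Classical in
/-- `χ(x) = x − 1` if `x` is an integer with `x ≥ 2`, and `χ(x) = ⌊x⌋` otherwise. -/
noncomputable def chi (x : ℝ) : ℝ :=
  if (∃ n : ℤ, x = (n : ℝ)) ∧ 2 ≤ x then x - 1 else (⌊x⌋ : ℝ)

/-!
Both bounds are sums of chords of the convex function `t ↦ 1/t` between consecutive integers
(`invChord`). The piecewise-linear interpolation of `1/t` at the integers is convex, so at `y` it
is the largest of these chords, attained on the interval `[chi y, chi y + 1]`; at an integer `n`
the chords on `[n - 1, n]` and `[n, n + 1]` agree, so the KAT term may use `chi` instead of the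
floor. Hence, with `m = chi (γ/α)`, the `i`-th YAT term is at least the chord on `[m, m + 1]`
evaluated at `γ'/α'`, times `α'`. Since `chord(g/a) · a` is affine in `(a, g)`, its difference
with the `i`-th KAT term is exactly `(N - 2m - 1) δ / (m (m + 1))`, which together with the share
`δ/N` of `δ` is the `i`-th summand of the claimed bound.
-/

/-- The chord of `t ↦ 1 / t` between `m` and `m + 1`, evaluated at `x`. -/
noncomputable def invChord (m x : ℝ) : ℝ :=
  1 / m - (x - m) / ((1 + m) * m)

lemma invChord_eq {m : ℝ} (hm : 0 < m) (x : ℝ) :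
    invChord m x = (2 * m + 1 - x) / (m * (m + 1)) := by
  unfold invChord
  field_simp
  ring

lemma invChord_div_mul {m : ℝ} (hm : 0 < m) (g : ℝ) {a : ℝ} (ha : a ≠ 0) :
    invChord m (g / a) * a = ((2 * m + 1) * a - g) / (m * (m + 1)) := by
  rw [invChord_eq hm]
  field_simp

lemma invChord_sub_one_self {n : ℝ} (hn : 2 ≤ n) : invChord (n - 1) n = invChord n n := by
  rw [invChord_eq (by linarith), invChord_eq (by linarith),
    div_eq_div_iff (by nlinarith) (by nlinarith)]
  ring

lemma invChord_le_invChord {m k : ℤ} (hm : 1 ≤ m) (hk : 1 ≤ k) {y : ℝ}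
    (hky : (k : ℝ) ≤ y) (hyk : y ≤ k + 1) : invChord m y ≤ invChord k y := by
  have hmR : (1 : ℝ) ≤ m := by exact_mod_cast hm
  have hkR : (1 : ℝ) ≤ k := by exact_mod_cast hk
  have hd₁ : (0 : ℝ) ≤ (m - k) * (m - k + 1) := by
    have : (0 : ℤ) ≤ (m - k) * (m - k + 1) := by rcases le_or_gt 0 (m - k) with h | h <;> nlinarith
    exact_mod_cast this
  have hd₂ : (0 : ℝ) ≤ (m - k) * (m - k - 1) := by
    have : (0 : ℤ) ≤ (m - k) * (m - k - 1) := by rcases le_or_gt 1 (m - k) with h | h <;> nlinarith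
    exact_mod_cast this
  rw [invChord_eq (by linarith), invChord_eq (by linarith),
    div_le_div_iff₀ (by positivity) (by positivity)]
  have hdiff : (2 * (k : ℝ) + 1 - y) * (m * (m + 1)) - (2 * m + 1 - y) * (k * (k + 1))
      = (k + 1 - y) * (k + 1) * ((m - k) * (m - k + 1)) + (y - k) * k * ((m - k) * (m - k - 1)) := by
    ring
  nlinarith [mul_nonneg (mul_nonneg (sub_nonneg.2 hyk) (by linarith : (0 : ℝ) ≤ k + 1)) hd₁,
    mul_nonneg (mul_nonneg (sub_nonneg.2 hky) (by linarith : (0 : ℝ) ≤ k)) hd₂]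

lemma exists_int_eq_chi {x : ℝ} (hx : 1 ≤ x) :
    ∃ m : ℤ, chi x = m ∧ 1 ≤ m ∧ (m : ℝ) ≤ x ∧ x ≤ m + 1 := by
  unfold chi
  split_ifs with h
  · obtain ⟨⟨n, rfl⟩, h2⟩ := h
    have hn : (2 : ℤ) ≤ n := by exact_mod_cast h2
    exact ⟨n - 1, by push_cast; ring, by omega, by push_cast; linarith, by push_cast; linarith⟩
  · exact ⟨⌊x⌋, rfl, Int.le_floor.mpr (by exact_mod_cast hx), Int.floor_le x,
      (Int.lt_floor_add_one x).le⟩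

lemma invChord_le_invChord_chi {m : ℤ} (hm : 1 ≤ m) {y : ℝ} (hy : 1 ≤ y) :
    invChord m y ≤ invChord (chi y) y := by
  obtain ⟨k, hk, hk1, hky, hyk⟩ := exists_int_eq_chi hy
  rw [hk]
  exact invChord_le_invChord hm hk1 hky hyk

lemma invChord_floor_eq_invChord_chi (x : ℝ) : invChord ⌊x⌋ x = invChord (chi x) x := by
  unfold chi
  split_ifs with h
  · obtain ⟨⟨n, rfl⟩, h2⟩ := h
    rw [Int.floor_intCast, invChord_sub_one_self h2]
  · rfl

/-- The `i`-th summand of the gap, with `n = N`, `a = α i`, `g = γ i`. -/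
lemma invChord_gap {n a g δ : ℝ} (hn : 0 < n) (ha : 0 < a) (hag : a ≤ g) (hδa : δ < a)
    (hδg : (n - 1) * δ ≤ g - a) :
    (n - chi (g / a)) * (n - chi (g / a) - 1) / (chi (g / a) * (chi (g / a) + 1)) * (δ / n)
        + invChord ⌊g / a⌋ (g / a) * a
      ≤ invChord (chi ((g - n * δ) / (a - δ))) ((g - n * δ) / (a - δ)) * (a - δ) + δ / n := by
  have ha' : 0 < a - δ := by linarith
  obtain ⟨m, hm, hm1, -, -⟩ := exists_int_eq_chi ((one_le_div ha).2 hag)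
  have hmR : (0 : ℝ) < m := by exact_mod_cast hm1
  have hchord : invChord m ((g - n * δ) / (a - δ)) * (a - δ)
      ≤ invChord (chi ((g - n * δ) / (a - δ))) ((g - n * δ) / (a - δ)) * (a - δ) :=
    mul_le_mul_of_nonneg_right
      (invChord_le_invChord_chi hm1 ((one_le_div ha').2 (by linarith))) ha'.le
  rw [invChord_floor_eq_invChord_chi, hm, invChord_div_mul hmR _ ha.ne']
  rw [invChord_div_mul hmR _ ha'.ne'] at hchord
  have hgap : (n - m) * (n - m - 1) / (m * (m + 1)) * (δ / n) + ((2 * m + 1) * a - g) / (m * (m + 1))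
      = ((2 * m + 1) * (a - δ) - (g - n * δ)) / (m * (m + 1)) + δ / n := by
    field_simp
    ring
  linarith

/-- Lower bound on the gap `ℓ_YAT − ℓ_KAT` between the new analytical bound and the KAT bound. -/
theorem yat_kat_gap (N : ℕ) (hN : 2 ≤ N) (α γ : Fin N → ℝ)
    (hαpos : ∀ i, 0 < α i) (hγ1 : ∀ i, α i ≤ γ i)
    (δ : ℝ)
    (hδα : ∀ i, δ < α i) (hδβ : ∀ i, δ ≤ (γ i - α i) / ((N : ℝ) - 1))
    (α' γ' : Fin N → ℝ)
    (hα' : ∀ i, α' i = α i - δ) (hγ' : ∀ i, γ' i = γ i - (N : ℝ) * δ)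
    (lKAT lYAT : ℝ)
    (hKAT : lKAT = ∑ i : Fin N, (1 / (⌊γ i / α i⌋ : ℝ) -
        (γ i / α i - (⌊γ i / α i⌋ : ℝ)) /
          ((1 + (⌊γ i / α i⌋ : ℝ)) * (⌊γ i / α i⌋ : ℝ))) * α i)
    (hYAT : lYAT = δ + ∑ i : Fin N, (1 / chi (γ' i / α' i) -
        (γ' i / α' i - chi (γ' i / α' i)) /
          ((1 + chi (γ' i / α' i)) * chi (γ' i / α' i))) * α' i) :
    lYAT - lKAT ≥
      (∑ i : Fin N, ((N : ℝ) - chi (γ i / α i)) * ((N : ℝ) - chi (γ i / α i) - 1) /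
        (chi (γ i / α i) * (chi (γ i / α i) + 1))) * (δ / (N : ℝ)) := by
  have hN1 : (0 : ℝ) < N - 1 := by
    have : (2 : ℝ) ≤ N := by exact_mod_cast hN
    linarith
  have hterm := fun i => invChord_gap (n := N) (by linarith) (hαpos i) (hγ1 i) (hδα i)
    (by rw [mul_comm]; exact (le_div_iff₀ hN1).1 (hδβ i))
  have hshare : ∑ _i : Fin N, δ / (N : ℝ) = δ := by
    rw [Finset.sum_const, Finset.card_univ, Fintype.card_fin, nsmul_eq_mul]
    field_simp
  have hsum := Finset.sum_le_sum fun i (_ : i ∈ Finset.univ) => hterm i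
  rw [Finset.sum_add_distrib, Finset.sum_add_distrib, hshare] at hsum
  simp only [hKAT, hYAT, hα', hγ', Finset.sum_mul]
  unfold invChord at hsum
  linarith
end

section
/- Let (Ω, P) be a probability space and let A_1, …, A_N be measurable events (N ≥ 2) with P(A_i) > 0 for every i. Let δ = max(0, max_{1≤i≤N} (γ_i − (N−1)α_i)). Then P(⋃_{i=1}^N A_i) ≥ Σ_{i=1}^N [1/⌊γ_i/α_i⌋ − (γ_i/α_i − ⌊γ_i/α_i⌋)/((1+⌊γ_i/α_i⌋)⌊γ_i/α_i⌋)]·α_i + ( Σ_{i=1}^N (N − χ(γ_i/α_i))·(N − χ(γ_i/α_i) − 1) / ( χ(γ_i/α_i)·(χ(γ_i/α_i) + 1) ) ) · δ/N. -/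
/-!
Decompose `Ω` into the atoms `{ω | memIndices A ω = T}` of the events, with masses `p T`. Then
`α i = ∑_{T ∋ i} p T`, `γ i = ∑_{T ∋ i} #T * p T`, `P (⋃ i, A i) = ∑ i, ∑_{T ∋ i} p T / #T`, and
`δ ≤ p univ` because `#T ≤ N - 1` for `T ≠ univ`.

For integers `c, k ≥ 1` the secant of `k ↦ 1 / k` through `c` and `c + 1` lies below `1 / k`, with
gap `(k - c) (k - c - 1) / (k c (c + 1))`. Summing `secant ≤ 1 / #T` against `p` over `T ∋ i`, and
keeping the gap only at `T = univ`, gives the `i`-th summand of the bound for `c = χ (γ i / α i)`.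
This `c` is an integer at least `1`, and its secant agrees with that of `⌊γ i / α i⌋` at
`x = γ i / α i`: the two differ only when `x ≥ 2` is an integer, and then both secants pass
through `(x, 1 / x)`.
-/

open MeasureTheory

section Secant

/-- The secant of `x ↦ 1 / x` through `c` and `c + 1`. -/
noncomputable def invSecant (c x : ℝ) : ℝ := (2 * c + 1 - x) / (c * (c + 1))

lemma one_div_sub_invSecant {c k : ℝ} (hc : c ≠ 0) (hc' : c + 1 ≠ 0) (hk : k ≠ 0) :
    1 / k - invSecant c k = (k - c) * (k - c - 1) / (k * (c * (c + 1))) := by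
  unfold invSecant
  field_simp
  ring

lemma intCast_mul_sub_one_nonneg (n : ℤ) : (0 : ℝ) ≤ n * (n - 1) := by
  have : 0 ≤ n * (n - 1) := by rcases le_or_gt 1 n with h | h <;> nlinarith
  exact_mod_cast this

lemma invSecant_le_one_div {c : ℤ} {k : ℕ} (hc : 1 ≤ c) (hk : 1 ≤ k) :
    invSecant c k ≤ 1 / k := by
  have hc' : (1 : ℝ) ≤ c := by exact_mod_cast hc
  have hk' : (1 : ℝ) ≤ k := by exact_mod_cast hk
  have hgap : 0 ≤ ((k : ℝ) - c) * ((k : ℝ) - c - 1) / (k * (c * (c + 1))) := by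
    refine div_nonneg ?_ (by positivity)
    exact_mod_cast intCast_mul_sub_one_nonneg (k - c)
  linarith [one_div_sub_invSecant (c := c) (k := k) (by positivity) (by positivity) (by positivity)]

lemma invSecant_floor {x : ℝ} (hx : 1 ≤ x) :
    invSecant ⌊x⌋ x = 1 / ⌊x⌋ - (x - ⌊x⌋) / ((1 + ⌊x⌋) * ⌊x⌋) := by
  have : (1 : ℝ) ≤ ⌊x⌋ := by exact_mod_cast Int.le_floor.2 (by exact_mod_cast hx)
  unfold invSecant
  field_simp
  ring

lemma invSecant_chi {x : ℝ} (hx : 1 ≤ x) : invSecant (chi x) x = invSecant ⌊x⌋ x := by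
  unfold chi
  split_ifs with h
  · obtain ⟨⟨n, rfl⟩, h2⟩ := h
    rw [Int.floor_intCast]
    unfold invSecant
    rw [div_eq_div_iff (by nlinarith) (by nlinarith)]
    ring
  · rfl

lemma exists_chi_eq_intCast {x : ℝ} (hx : 1 ≤ x) : ∃ m : ℤ, 1 ≤ m ∧ chi x = m := by
  unfold chi
  split_ifs with h
  · obtain ⟨⟨n, rfl⟩, h2⟩ := h
    exact ⟨n - 1, by exact_mod_cast (by linarith : (1 : ℝ) ≤ n - 1), by push_cast; ring⟩
  · exact ⟨⌊x⌋, Int.le_floor.2 (by exact_mod_cast hx), rfl⟩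

lemma sum_invSecant_mul {κ : Type*} (s : Finset κ) (c : ℝ) (k w : κ → ℝ)
    (hw : ∑ j ∈ s, w j ≠ 0) :
    ∑ j ∈ s, invSecant c (k j) * w j =
      invSecant c ((∑ j ∈ s, k j * w j) / ∑ j ∈ s, w j) * ∑ j ∈ s, w j := by
  simp only [invSecant, div_mul_eq_mul_div, ← Finset.sum_div, sub_mul, Finset.sum_sub_distrib,
    ← Finset.mul_sum]
  field_simp

end Secant

section Combinatorics
open Finset
variable {ι : Type*} [Fintype ι] [DecidableEq ι]

lemma sum_sum_filter_mem {M : Type*} [AddCommMonoid M] (S : Finset (Finset ι))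
    (f : Finset ι → M) : ∑ j, ∑ T ∈ S with j ∈ T, f T = ∑ T ∈ S, #T • f T := by
  simp_rw [sum_filter]
  rw [sum_comm]
  simp

lemma sum_sum_filter_mem_div_card (p : Finset ι → ℝ) :
    ∑ i, ∑ T with i ∈ T, p T / #T = ∑ T with T.Nonempty, p T := by
  rw [sum_sum_filter_mem, sum_filter]
  refine sum_congr rfl fun T _ => ?_
  split_ifs with hT
  · have : (#T : ℝ) ≠ 0 := by exact_mod_cast hT.card_pos.ne'
    rw [nsmul_eq_mul]
    field_simp
  · simp [not_nonempty_iff_eq_empty.1 hT]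

lemma sum_invSecant_mul_add_le_sum_div_card {p : Finset ι → ℝ} (hp : ∀ T, 0 ≤ p T) {d : ℝ}
    (hd : d ≤ p univ) {c : ℤ} (hc : 1 ≤ c) (i : ι) :
    ∑ T with i ∈ T, invSecant c #T * p T +
        (1 / Fintype.card ι - invSecant c (Fintype.card ι)) * d ≤
      ∑ T with i ∈ T, p T / #T := by
  have hgap : ∀ T ∈ ({T | i ∈ T} : Finset (Finset ι)), 0 ≤ (1 / #T - invSecant c #T) * p T :=
    fun T hT => mul_nonneg (sub_nonneg.2 (invSecant_le_one_div hc
      (card_pos.2 ⟨i, (mem_filter.1 hT).2⟩))) (hp T)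
  have huniv : univ ∈ ({T | i ∈ T} : Finset (Finset ι)) := by simp
  calc _ ≤ ∑ T with i ∈ T, invSecant c #T * p T +
          (1 / #(univ : Finset ι) - invSecant c #(univ : Finset ι)) * p univ := by
        rw [card_univ]
        gcongr
        exact sub_nonneg.2 (invSecant_le_one_div hc (Fintype.card_pos_iff.2 ⟨i⟩))
    _ ≤ ∑ T with i ∈ T, invSecant c #T * p T +
          ∑ T with i ∈ T, (1 / #T - invSecant c #T) * p T := by
        gcongr
        exact single_le_sum hgap huniv
    _ = ∑ T with i ∈ T, p T / #T := by
        rw [← sum_add_distrib]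
        exact sum_congr rfl fun T _ => by ring

lemma sum_card_mul_sub_le {p : Finset ι → ℝ} (hp : ∀ T, 0 ≤ p T) (i : ι) :
    ∑ T with i ∈ T, #T * p T - (Fintype.card ι - 1) * ∑ T with i ∈ T, p T ≤ p univ := by
  have huniv : univ ∈ ({T | i ∈ T} : Finset (Finset ι)) := by simp
  rw [mul_sum, ← sum_sub_distrib, ← add_sum_erase _ _ huniv, card_univ]
  refine add_le_of_le_of_nonpos (by ring_nf; rfl) (sum_nonpos fun T hT => ?_)
  have hlt : #T < Fintype.card ι := (card_lt_iff_ne_univ T).2 (ne_of_mem_erase hT)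
  have : (#T : ℝ) + 1 ≤ Fintype.card ι := by exact_mod_cast hlt
  nlinarith [hp T]

lemma kat_summand_le_sum_div_card {p : Finset ι → ℝ} (hp : ∀ T, 0 ≤ p T) {d : ℝ} (hd : d ≤ p univ)
    (i : ι) {α γ : ℝ} (hα : α = ∑ T with i ∈ T, p T) (hγ : γ = ∑ T with i ∈ T, #T * p T)
    (hα₀ : 0 < α) :
    (1 / (⌊γ / α⌋ : ℝ) - (γ / α - ⌊γ / α⌋) / ((1 + ⌊γ / α⌋) * ⌊γ / α⌋)) * α +
        (Fintype.card ι - chi (γ / α)) * (Fintype.card ι - chi (γ / α) - 1) /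
          (chi (γ / α) * (chi (γ / α) + 1)) * (d / Fintype.card ι) ≤
      ∑ T with i ∈ T, p T / #T := by
  have hαγ : α ≤ γ := by
    rw [hα, hγ]
    refine sum_le_sum fun T hT => le_mul_of_one_le_left (hp T) ?_
    exact_mod_cast card_pos.2 ⟨i, (mem_filter.1 hT).2⟩
  have hx : 1 ≤ γ / α := (one_le_div hα₀).2 hαγ
  obtain ⟨c, hc, hchi⟩ := exists_chi_eq_intCast hx
  have hc' : (1 : ℝ) ≤ c := by exact_mod_cast hc
  have hN : (0 : ℝ) < Fintype.card ι := by exact_mod_cast Fintype.card_pos_iff.2 ⟨i⟩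
  have hfloor : (1 / (⌊γ / α⌋ : ℝ) - (γ / α - ⌊γ / α⌋) / ((1 + ⌊γ / α⌋) * ⌊γ / α⌋)) * α =
      ∑ T with i ∈ T, invSecant c #T * p T := by
    rw [← invSecant_floor hx, ← invSecant_chi hx, hchi, hα, hγ,
      sum_invSecant_mul _ _ _ _ (hα ▸ hα₀.ne')]
  have hgap : (Fintype.card ι - chi (γ / α)) * (Fintype.card ι - chi (γ / α) - 1) /
      (chi (γ / α) * (chi (γ / α) + 1)) * (d / Fintype.card ι) =
      (1 / Fintype.card ι - invSecant c (Fintype.card ι)) * d := by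
    rw [hchi, one_div_sub_invSecant (by positivity) (by positivity) hN.ne']
    field_simp
  rw [hfloor, hgap]
  exact sum_invSecant_mul_add_le_sum_div_card hp hd hc i

end Combinatorics

section Atoms
open Finset
variable {ι Ω : Type*} [Fintype ι]

open Classical in
noncomputable def memIndices (A : ι → Set Ω) (ω : Ω) : Finset ι := {i | ω ∈ A i}

variable {A : ι → Set Ω}

lemma measurableSet_memIndices_preimage [MeasurableSpace Ω] (hA : ∀ i, MeasurableSet (A i))
    (T : Finset ι) :
    MeasurableSet (memIndices A ⁻¹' {T}) := by
  have : memIndices A ⁻¹' {T} = ⋂ i, {ω | ω ∈ A i ↔ i ∈ T} := by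
    ext ω
    simp [memIndices, Finset.ext_iff]
  rw [this]
  refine MeasurableSet.iInter fun i => ?_
  by_cases hi : i ∈ T <;> simp only [hi, iff_true, iff_false]
  exacts [hA i, (hA i).compl]

lemma memIndices_preimage_filter [DecidableEq ι] (S : Finset (Finset ι)) (j : ι) :
    memIndices A ⁻¹' ↑{T ∈ S | j ∈ T} = memIndices A ⁻¹' ↑S ∩ A j := by
  ext ω
  simp [memIndices]

lemma memIndices_preimage_nonempty :
    memIndices A ⁻¹' ↑({T | T.Nonempty} : Finset (Finset ι)) = ⋃ i, A i := by
  ext ω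
  simp only [Set.mem_preimage, coe_filter, mem_univ, true_and, Set.mem_ofPred_eq,
    Set.mem_iUnion]
  simp [memIndices, Finset.Nonempty]

lemma measureReal_memIndices_preimage [MeasurableSpace Ω] (P : Measure Ω) [IsFiniteMeasure P]
    (hA : ∀ i, MeasurableSet (A i)) (S : Finset (Finset ι)) :
    P.real (memIndices A ⁻¹' S) = ∑ T ∈ S, P.real (memIndices A ⁻¹' {T}) :=
  (sum_measureReal_preimage_singleton S fun T _ => measurableSet_memIndices_preimage hA T).symm

variable [MeasurableSpace Ω] (P : Measure Ω) [IsFiniteMeasure P] (hA : ∀ i, MeasurableSet (A i))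
include hA

lemma measureReal_eq_sum_mem [DecidableEq ι] (i : ι) :
    P.real (A i) = ∑ T with i ∈ T, P.real (memIndices A ⁻¹' {T}) := by
  rw [← measureReal_memIndices_preimage P hA, memIndices_preimage_filter, coe_univ,
    Set.preimage_univ, Set.univ_inter]

lemma sum_measureReal_inter_eq_sum_card_mul [DecidableEq ι] (i : ι) :
    ∑ j, P.real (A i ∩ A j) = ∑ T with i ∈ T, #T * P.real (memIndices A ⁻¹' {T}) := by
  simp_rw [← nsmul_eq_mul, ← sum_sum_filter_mem, ← measureReal_memIndices_preimage P hA,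
    memIndices_preimage_filter, coe_univ, Set.preimage_univ, Set.univ_inter]

lemma measureReal_iUnion_eq_sum_div_card [DecidableEq ι] :
    P.real (⋃ i, A i) = ∑ i, ∑ T with i ∈ T, P.real (memIndices A ⁻¹' {T}) / #T := by
  rw [sum_sum_filter_mem_div_card, ← measureReal_memIndices_preimage P hA,
    memIndices_preimage_nonempty]

end Atoms

/-- The KAT bound improved by the gap term: an analytical lower bound on the union probability. -/
theorem kat_plus_gap_bound {Ω : Type*} [MeasurableSpace Ω] (P : Measure Ω)
    [IsProbabilityMeasure P] (N : ℕ) (hN : 2 ≤ N)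
    (A : Fin N → Set Ω) (hA : ∀ i, MeasurableSet (A i))
    (hpos : ∀ i, 0 < P (A i))
    (α γ : Fin N → ℝ)
    (hα : ∀ i, α i = (P (A i)).toReal)
    (hγ : ∀ i, γ i = ∑ j : Fin N, (P (A i ∩ A j)).toReal)
    (δ : ℝ)
    (hδ : δ = max 0 (Finset.univ.sup' (Finset.univ_nonempty_iff.mpr ⟨⟨0, by omega⟩⟩)
        (fun i => γ i - ((N : ℝ) - 1) * α i))) :
    (P (⋃ i, A i)).toReal ≥
      (∑ i : Fin N, (1 / (⌊γ i / α i⌋ : ℝ) -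
        (γ i / α i - (⌊γ i / α i⌋ : ℝ)) /
          ((1 + (⌊γ i / α i⌋ : ℝ)) * (⌊γ i / α i⌋ : ℝ))) * α i) +
      (∑ i : Fin N, ((N : ℝ) - chi (γ i / α i)) * ((N : ℝ) - chi (γ i / α i) - 1) /
        (chi (γ i / α i) * (chi (γ i / α i) + 1))) * (δ / (N : ℝ)) := by
  open Finset in
  set p : Finset (Fin N) → ℝ := fun T => P.real (memIndices A ⁻¹' {T})
  have hp : ∀ T, 0 ≤ p T := fun T => measureReal_nonneg
  have hαp : ∀ i, α i = ∑ T with i ∈ T, p T := fun i => by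
    rw [hα, ← measureReal_def, measureReal_eq_sum_mem P hA]
  have hγp : ∀ i, γ i = ∑ T with i ∈ T, #T * p T := fun i => by
    simp_rw [hγ, ← measureReal_def]
    exact sum_measureReal_inter_eq_sum_card_mul P hA i
  have hδp : δ ≤ p univ := by
    rw [hδ]
    refine max_le (hp univ) (sup'_le _ _ fun i _ => ?_)
    simpa only [hαp, hγp, Fintype.card_fin] using sum_card_mul_sub_le hp i
  rw [ge_iff_le, ← measureReal_def, measureReal_iUnion_eq_sum_div_card P hA, sum_mul,
    ← sum_add_distrib]
  refine sum_le_sum fun i _ => ?_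
  have hα₀ : 0 < α i := hα i ▸ ENNReal.toReal_pos (hpos i).ne' (measure_ne_top P _)
  simpa only [Fintype.card_fin] using kat_summand_le_sum_div_card hp hδp i (hαp i) (hγp i) hα₀
end

section
/- (Achievability construction) Let N ≥ 1 and let a_i(k) ≥ 0, for i, k ∈ {1,…,N}, be real numbers satisfying: (i) Σ_{i=1}^N a_i(k) ≥ k·a_j(k) for every j, k ∈ {1,…,N}, and (ii) Σ_{i=1}^N Σ_{k=1}^N a_i(k)/k ≤ 1. Then there exist a probability space (Ω, P) and measurable events A_1, …, A_N in Ω such that P(A_i ∩ {ω : deg(ω) = k}) = a_i(k) for all i, k ∈ {1,…,N}, where deg(ω) = #{i ∈ {1,…,N} : ω ∈ A_i}. -/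
/-!
For each degree `k` reserve a block of length `m_k = (∑ i, a i k) / k`; condition (ii) says that
these blocks fit into `[0, 1)`. Inside block `k`, lay intervals of lengths `a 1 k, …, a N k` end to
end on `[0, k m_k)` and wrap this segment `k` times around the block, viewed as a circle of
circumference `m_k`. A point of the block has `k` preimages on the segment, and by condition (i)
no interval is longer than `m_k`, so they lie in `k` distinct intervals: every point of block `k`
has degree exactly `k`, and `A_i ∩ {deg = k}` is the wrapped `i`-th interval, of measure `a i k`.
-/

open MeasureTheory Set Function

namespace DegreeProfile

section Arc

open Finset

variable {ι : Type*} [LinearOrder ι] [LocallyFiniteOrderBot ι] (b : ι → ℝ)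

def arc (i : ι) : Set ℝ := Ico (∑ j ∈ Iio i, b j) (∑ j ∈ Iio i, b j + b i)

variable {b}

lemma sum_Iio_add_le_sum_Iio (hb : ∀ j, 0 ≤ b j) {i j : ι} (hij : i < j) :
    ∑ l ∈ Iio i, b l + b i ≤ ∑ l ∈ Iio j, b l := by
  rw [sum_Iio_add_eq_sum_Iic]
  exact sum_le_sum_of_subset_of_nonneg (fun l hl => mem_Iio.2 ((mem_Iic.1 hl).trans_lt hij))
    fun l _ _ => hb l

lemma pairwise_disjoint_arc (hb : ∀ j, 0 ≤ b j) : Pairwise (Disjoint on arc b) :=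
  (pairwise_disjoint_on _).2 fun _ _ hij => Set.disjoint_left.2 fun _ hi hj =>
    (hj.1.trans_lt hi.2).not_ge (sum_Iio_add_le_sum_Iio hb hij)

lemma arc_subset_Ico_sum [Fintype ι] (hb : ∀ j, 0 ≤ b j) (i : ι) :
    arc b i ⊆ Ico 0 (∑ j, b j) := by
  refine Ico_subset_Ico (sum_nonneg fun j _ => hb j) ?_
  rw [sum_Iio_add_eq_sum_Iic]
  exact sum_le_sum_of_subset_of_nonneg (subset_univ _) fun l _ _ => hb l

lemma exists_mem_arc [Fintype ι] {y : ℝ} (hy : y ∈ Ico 0 (∑ j, b j)) : ∃ i, y ∈ arc b i := by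
  classical
  set s := univ.filter fun i => y < ∑ j ∈ Iic i, b j
  have hs : s.Nonempty := by
    have hι := nonempty_of_sum_ne_zero (hy.1.trans_lt hy.2).ne'
    refine ⟨univ.max' hι, mem_filter.2 ⟨mem_univ _, hy.2.trans_le (le_of_eq ?_)⟩⟩
    exact sum_congr (eq_univ_of_forall fun j => mem_Iic.2 (le_max' _ j (mem_univ j))).symm
      fun _ _ => rfl
  -- the first arc ending after `y` contains `y`
  set i := s.min' hs
  refine ⟨i, ?_, (sum_Iio_add_eq_sum_Iic (f := b) i).symm ▸ (mem_filter.1 (s.min'_mem hs)).2⟩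
  by_contra! hlt
  have hIio := nonempty_of_sum_ne_zero (hy.1.trans_lt hlt).ne'
  set p := (Finset.Iio i).max' hIio
  have hpi : p < i := mem_Iio.1 (max'_mem _ hIio)
  have hIio_eq : Finset.Iio i = Finset.Iic p := by
    ext l
    exact ⟨fun hl => mem_Iic.2 (le_max' _ l hl), fun hl => mem_Iio.2 ((mem_Iic.1 hl).trans_lt hpi)⟩
  exact (s.min'_le p (mem_filter.2 ⟨mem_univ _, hIio_eq ▸ hlt⟩)).not_gt hpi

lemma preimage_sub_subset_arc {s : Set ℝ} {i : ι} (hs : s ⊆ Ico 0 (b i)) :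
    (· - ∑ j ∈ Iio i, b j) ⁻¹' s ⊆ arc b i := fun x hx => by
  obtain ⟨h1, h2⟩ := hs hx
  exact ⟨by linarith, by linarith⟩

lemma iUnion_arc [Fintype ι] (hb : ∀ j, 0 ≤ b j) : ⋃ i, arc b i = Ico 0 (∑ j, b j) :=
  (iUnion_subset (arc_subset_Ico_sum hb)).antisymm fun _ hy => mem_iUnion.2 (exists_mem_arc hy)

lemma arc_const {k : ℕ} (m : ℝ) (r : Fin k) : arc (fun _ => m) r = Ico (r * m) (r * m + m) := by
  simp [arc, Fin.card_Iio]

end Arc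

lemma eq_of_add_mul_mem_Ico {s l m y : ℝ} (hl : l ≤ m) {r r' : ℕ}
    (h : y + r * m ∈ Ico s (s + l)) (h' : y + r' * m ∈ Ico s (s + l)) : r = r' := by
  obtain ⟨h1, h2⟩ := h
  obtain ⟨h1', h2'⟩ := h'
  have hm : 0 < m := by linarith
  rcases lt_trichotomy r r' with hr | hr | hr
  · have : (r : ℝ) + 1 ≤ r' := by exact_mod_cast hr
    nlinarith
  · exact hr
  · have : (r' : ℝ) + 1 ≤ r := by exact_mod_cast hr
    nlinarith

section Wrap

variable {ι : Type*} [LinearOrder ι] [LocallyFiniteOrderBot ι] (b : ι → ℝ) (m : ℝ) (k : ℕ)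

/-- `arc b i` wrapped `k` times around a circle of circumference `m`, represented as `[0, m)`. -/
def wrappedArc (i : ι) : Set ℝ := ⋃ r : Fin k, (· + r * m) ⁻¹' (arc (fun _ => m) r ∩ arc b i)

variable {b m k}

lemma mem_wrappedArc {i : ι} {y : ℝ} :
    y ∈ wrappedArc b m k i ↔ y ∈ Ico 0 m ∧ ∃ r : Fin k, y + r * m ∈ arc b i := by
  simp only [wrappedArc, arc_const, mem_iUnion, mem_preimage, mem_inter_iff, mem_Ico]
  constructor
  · rintro ⟨r, ⟨h1, h2⟩, h⟩
    exact ⟨⟨by linarith, by linarith⟩, r, h⟩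
  · rintro ⟨⟨h1, h2⟩, r, h⟩
    exact ⟨r, ⟨by linarith, by linarith⟩, h⟩

lemma wrappedArc_subset_Ico (i : ι) : wrappedArc b m k i ⊆ Ico 0 m :=
  fun _ hy => (mem_wrappedArc.1 hy).1

lemma measurableSet_wrappedArc (i : ι) : MeasurableSet (wrappedArc b m k i) :=
  MeasurableSet.iUnion fun _ =>
    (measurableSet_Ico.inter measurableSet_Ico).preimage (measurable_add_const _)

lemma card_mem_wrappedArc [Fintype ι] (hb : ∀ i, 0 ≤ b i) (hbm : ∀ i, b i ≤ m)
    (hsum : ∑ i, b i = k * m) {y : ℝ} (hy : y ∈ Ico 0 m) :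
    Nat.card {i // y ∈ wrappedArc b m k i} = k := by
  have hpt : ∀ r : Fin k, y + r * m ∈ Ico 0 (∑ i, b i) := by
    intro r
    have : (r : ℝ) + 1 ≤ k := by exact_mod_cast r.isLt
    rw [hsum]
    constructor <;> nlinarith [hy.1, hy.2]
  choose idx hidx using fun r => exists_mem_arc (hpt r)
  have hrange : {i | y ∈ wrappedArc b m k i} = range idx := by
    ext i
    simp only [mem_ofPred_eq, mem_wrappedArc, hy, true_and, mem_range]
    constructor
    · rintro ⟨r, hr⟩
      exact ⟨r, (pairwise_disjoint_arc hb).eq (Set.not_disjoint_iff.2 ⟨_, hidx r, hr⟩)⟩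
    · rintro ⟨r, rfl⟩
      exact ⟨r, hidx r⟩
  have hinj : Injective idx := fun r r' h =>
    Fin.ext (eq_of_add_mul_mem_Ico (hbm _) (hidx r) (h ▸ hidx r'))
  rw [← coe_ofPred, hrange, Nat.card_range_of_injective hinj, Nat.card_eq_fintype_card,
    Fintype.card_fin]

lemma volume_wrappedArc [Fintype ι] (hb : ∀ i, 0 ≤ b i) {i : ι} (hbm : b i ≤ m)
    (hsum : ∑ i, b i = k * m) : volume (wrappedArc b m k i) = ENNReal.ofReal (b i) := by
  have hm : 0 ≤ m := (hb i).trans hbm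
  have hmeas : ∀ r : Fin k, MeasurableSet (arc (fun _ => m) r ∩ arc b i) :=
    fun _ => measurableSet_Ico.inter measurableSet_Ico
  have hpieces : Pairwise (Disjoint on fun r : Fin k =>
      (· + r * m) ⁻¹' (arc (fun _ => m) r ∩ arc b i)) :=
    fun r r' hne => Set.disjoint_left.2 fun y hr hr' =>
      hne (Fin.ext (eq_of_add_mul_mem_Ico hbm hr.2 hr'.2))
  have hslots : ⋃ r : Fin k, arc (fun _ => m) r = Ico 0 (∑ i, b i) := by
    rw [iUnion_arc fun _ => hm, hsum]
    simp
  calc volume (wrappedArc b m k i)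
      = ∑ r : Fin k, volume ((· + r * m) ⁻¹' (arc (fun _ => m) r ∩ arc b i)) := by
        rw [wrappedArc, measure_iUnion hpieces fun r => (hmeas r).preimage (measurable_add_const _),
          tsum_fintype]
    _ = ∑ r : Fin k, volume (arc (fun _ => m) r ∩ arc b i) := by
        simp only [measure_preimage_add_right]
    _ = volume (⋃ r : Fin k, arc (fun _ => m) r ∩ arc b i) := by
        rw [measure_iUnion (fun r r' hne => ((pairwise_disjoint_arc fun _ => hm) hne).mono
          inter_subset_left inter_subset_left) hmeas, tsum_fintype]
    _ = volume (arc b i) := by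
        rw [← iUnion_inter, hslots, inter_eq_right.2 (arc_subset_Ico_sum hb i)]
    _ = ENNReal.ofReal (b i) := by simp [arc, Real.volume_Ico]

end Wrap

section Blocks

variable {N : ℕ} (a : Fin N → ℕ → ℝ)

/-- `blockLength a 0 = 0` because `x / 0 = 0`, so block `0` is empty. -/
noncomputable def blockLength (k : Fin (N + 1)) : ℝ := (∑ i, a i k) / k

/-- `A_i`: on the `k`-th arc of `blockLength a`, the `i`-th degree-`k` interval wrapped around
that arc. -/
def event (i : Fin N) : Set ℝ :=
  ⋃ k : Fin (N + 1), (· - ∑ l ∈ Finset.Iio k, blockLength a l) ⁻¹'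
    wrappedArc (a · k) (blockLength a k) k i

variable {a}

lemma val_mem_Icc_one_of_ne_zero {k : Fin (N + 1)} (hk : (k : ℕ) ≠ 0) : (k : ℕ) ∈ Finset.Icc 1 N :=
  Finset.mem_Icc.2 ⟨Nat.one_le_iff_ne_zero.2 hk, Nat.lt_succ_iff.1 k.isLt⟩

lemma blockLength_nonneg (ha0 : ∀ i : Fin N, ∀ k ∈ Finset.Icc 1 N, 0 ≤ a i k) (k : Fin (N + 1)) :
    0 ≤ blockLength a k := by
  by_cases hk : (k : ℕ) = 0
  · simp [blockLength, hk]
  · exact div_nonneg (Finset.sum_nonneg fun i _ => ha0 i k (val_mem_Icc_one_of_ne_zero hk))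
      k.val.cast_nonneg

lemma sum_eq_mul_blockLength {k : Fin (N + 1)} (hk : (k : ℕ) ≠ 0) :
    ∑ i, a i k = k * blockLength a k :=
  (mul_div_cancel₀ _ (Nat.cast_ne_zero.2 hk)).symm

lemma le_blockLength (h1 : ∀ j : Fin N, ∀ k ∈ Finset.Icc 1 N, ∑ i : Fin N, a i k ≥ (k : ℝ) * a j k)
    {k : Fin (N + 1)} (hk : (k : ℕ) ≠ 0) (i : Fin N) : a i k ≤ blockLength a k :=
  (le_div_iff₀' (Nat.cast_pos.2 (Nat.pos_of_ne_zero hk))).2 (h1 i k (val_mem_Icc_one_of_ne_zero hk))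

lemma sum_blockLength_le_one (h2 : ∑ i : Fin N, ∑ k ∈ Finset.Icc 1 N, a i k / (k : ℝ) ≤ 1) :
    ∑ k, blockLength a k ≤ 1 := by
  have hsum : ∑ k, blockLength a k = ∑ k ∈ Finset.Icc 1 N, (∑ i, a i k) / k := by
    simp only [blockLength, Fin.sum_univ_succ, Fin.val_succ, Fin.val_zero, Nat.cast_zero,
      div_zero, zero_add]
    rw [Fin.sum_univ_eq_sum_range (fun j => (∑ i, a i (j + 1)) / ↑(j + 1)), Finset.range_eq_Ico,
      Finset.sum_Ico_add' (fun k => (∑ i, a i k) / k), Finset.Ico_add_one_right_eq_Icc]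
  rw [hsum]
  simp_rw [Finset.sum_div]
  rwa [Finset.sum_comm]

lemma preimage_wrappedArc_subset_arc (k : Fin (N + 1)) (i : Fin N) :
    (· - ∑ l ∈ Finset.Iio k, blockLength a l) ⁻¹' wrappedArc (a · k) (blockLength a k) k i ⊆
      arc (blockLength a) k :=
  preimage_sub_subset_arc (wrappedArc_subset_Ico i)

lemma measurableSet_event (i : Fin N) : MeasurableSet (event a i) :=
  MeasurableSet.iUnion fun _ => (measurableSet_wrappedArc i).preimage (measurable_sub_const _)

lemma mem_event_iff (ha0 : ∀ i : Fin N, ∀ k ∈ Finset.Icc 1 N, 0 ≤ a i k) {k : Fin (N + 1)}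
    {x : ℝ} (hx : x ∈ arc (blockLength a) k) {i : Fin N} :
    x ∈ event a i ↔
      x - ∑ l ∈ Finset.Iio k, blockLength a l ∈ wrappedArc (a · k) (blockLength a k) k i := by
  refine ⟨fun hi => ?_, fun hi => mem_iUnion.2 ⟨k, hi⟩⟩
  obtain ⟨k', hk'⟩ := mem_iUnion.1 hi
  obtain rfl : k' = k := (pairwise_disjoint_arc (blockLength_nonneg ha0)).eq
    (Set.not_disjoint_iff.2 ⟨x, preimage_wrappedArc_subset_arc k' i hk', hx⟩)
  exact hk'

lemma card_event (ha0 : ∀ i : Fin N, ∀ k ∈ Finset.Icc 1 N, 0 ≤ a i k)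
    (h1 : ∀ j : Fin N, ∀ k ∈ Finset.Icc 1 N, ∑ i : Fin N, a i k ≥ (k : ℝ) * a j k)
    {k : Fin (N + 1)} {x : ℝ} (hx : x ∈ arc (blockLength a) k) :
    Nat.card {j // x ∈ event a j} = k := by
  have hx' : x - ∑ l ∈ Finset.Iio k, blockLength a l ∈ Ico 0 (blockLength a k) :=
    ⟨by linarith [hx.1], by linarith [hx.2]⟩
  have hk : (k : ℕ) ≠ 0 := fun hk => by simp [blockLength, hk] at hx'
  simp_rw [mem_event_iff ha0 hx]
  exact card_mem_wrappedArc (fun i => ha0 i k (val_mem_Icc_one_of_ne_zero hk))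
    (le_blockLength h1 hk) (sum_eq_mul_blockLength hk) hx'

lemma event_inter_card_eq (ha0 : ∀ i : Fin N, ∀ k ∈ Finset.Icc 1 N, 0 ≤ a i k)
    (h1 : ∀ j : Fin N, ∀ k ∈ Finset.Icc 1 N, ∑ i : Fin N, a i k ≥ (k : ℝ) * a j k)
    (i : Fin N) (k : Fin (N + 1)) :
    event a i ∩ {x | Nat.card {j // x ∈ event a j} = k} =
      (· - ∑ l ∈ Finset.Iio k, blockLength a l) ⁻¹' wrappedArc (a · k) (blockLength a k) k i := by
  ext x
  refine ⟨fun ⟨hi, hcard⟩ => ?_, fun hx => ?_⟩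
  · obtain ⟨k', hk'⟩ := mem_iUnion.1 hi
    obtain rfl : k' = k :=
      Fin.ext (card_event ha0 h1 (preimage_wrappedArc_subset_arc k' i hk') ▸ hcard)
    exact hk'
  · exact ⟨mem_iUnion.2 ⟨k, hx⟩, card_event ha0 h1 (preimage_wrappedArc_subset_arc k i hx)⟩

lemma event_subset_Ico (ha0 : ∀ i : Fin N, ∀ k ∈ Finset.Icc 1 N, 0 ≤ a i k)
    (h2 : ∑ i : Fin N, ∑ k ∈ Finset.Icc 1 N, a i k / (k : ℝ) ≤ 1) (i : Fin N) :
    event a i ⊆ Ico 0 1 :=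
  iUnion_subset fun k => (preimage_wrappedArc_subset_arc k i).trans <|
    (arc_subset_Ico_sum (blockLength_nonneg ha0) k).trans
      (Ico_subset_Ico_right (sum_blockLength_le_one h2))

lemma volume_event_inter_card_eq (ha0 : ∀ i : Fin N, ∀ k ∈ Finset.Icc 1 N, 0 ≤ a i k)
    (h1 : ∀ j : Fin N, ∀ k ∈ Finset.Icc 1 N, ∑ i : Fin N, a i k ≥ (k : ℝ) * a j k)
    (i : Fin N) {k : Fin (N + 1)} (hk : (k : ℕ) ≠ 0) :
    volume (event a i ∩ {x | Nat.card {j // x ∈ event a j} = k}) = ENNReal.ofReal (a i k) := by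
  rw [event_inter_card_eq ha0 h1 i k,
    ← volume_wrappedArc (fun i => ha0 i k (val_mem_Icc_one_of_ne_zero hk))
      (le_blockLength h1 hk i) (sum_eq_mul_blockLength hk)]
  exact measure_preimage_add_right volume _ _

end Blocks

end DegreeProfile

open DegreeProfile in
theorem achievability_construction_general (N : ℕ) (a : Fin N → ℕ → ℝ)
    (ha0 : ∀ i : Fin N, ∀ k ∈ Finset.Icc 1 N, 0 ≤ a i k)
    (h1 : ∀ j : Fin N, ∀ k ∈ Finset.Icc 1 N, ∑ i : Fin N, a i k ≥ (k : ℝ) * a j k)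
    (h2 : ∑ i : Fin N, ∑ k ∈ Finset.Icc 1 N, a i k / (k : ℝ) ≤ 1) :
    ∃ (Ω : Type) (_ : MeasurableSpace Ω) (P : Measure Ω) (_ : IsProbabilityMeasure P)
      (A : Fin N → Set Ω), (∀ i, MeasurableSet (A i)) ∧
      ∀ i : Fin N, ∀ k ∈ Finset.Icc 1 N,
        (P (A i ∩ {ω | Nat.card {j : Fin N // ω ∈ A j} = k})).toReal = a i k := by
  refine ⟨ℝ, inferInstance, volume.restrict (Ico 0 1), ⟨by simp⟩, event a, measurableSet_event,
    fun i k hk => ?_⟩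
  obtain ⟨hk1, hkN⟩ := Finset.mem_Icc.1 hk
  rw [Measure.restrict_apply' measurableSet_Ico,
    inter_eq_left.2 (inter_subset_left.trans (event_subset_Ico ha0 h2 i)),
    volume_event_inter_card_eq ha0 h1 i (k := ⟨k, Nat.lt_succ_of_le hkN⟩)
      (Nat.one_le_iff_ne_zero.1 hk1),
    ENNReal.toReal_ofReal (ha0 i k hk)]

/-- Achievability construction: any nonnegative numbers `a i k` satisfying
`∑ i, a i k ≥ k * a j k` for all `j, k ∈ {1,…,N}` and `∑ i ∑ k, a i k / k ≤ 1`
arise as `a i k = P(A i ∩ {deg = k})` for some probability space and events. -/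
theorem achievability_construction (N : ℕ) (hN : 1 ≤ N) (a : Fin N → ℕ → ℝ)
    (ha0 : ∀ i : Fin N, ∀ k ∈ Finset.Icc 1 N, 0 ≤ a i k)
    (h1 : ∀ j : Fin N, ∀ k ∈ Finset.Icc 1 N, ∑ i : Fin N, a i k ≥ (k : ℝ) * a j k)
    (h2 : ∑ i : Fin N, ∑ k ∈ Finset.Icc 1 N, a i k / (k : ℝ) ≤ 1) :
    ∃ (Ω : Type) (_ : MeasurableSpace Ω) (P : Measure Ω) (_ : IsProbabilityMeasure P)
      (A : Fin N → Set Ω), (∀ i, MeasurableSet (A i)) ∧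
      ∀ i : Fin N, ∀ k ∈ Finset.Icc 1 N,
        (P (A i ∩ {ω | Nat.card {j : Fin N // ω ∈ A j} = k})).toReal = a i k :=
  achievability_construction_general N a ha0 h1 h2
end

section
/- (Value of the single-index KAT linear program) Let N ≥ 1 and let α, γ be real numbers with α > 0 and α ≤ γ ≤ N·α. Then the minimum of Σ_{k=1}^N x_k/k over all (x_1,…,x_N) with x_k ≥ 0 for all k, Σ_{k=1}^N x_k = α, and Σ_{k=1}^N k·x_k = γ, is attained and equals [ 1/⌊γ/α⌋ − (γ/α − ⌊γ/α⌋)/((1 + ⌊γ/α⌋)·⌊γ/α⌋) ] · α. -/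
/-!
The secant of `K ↦ 1 / K` through `M` and `M + 1` lies below `1 / K` at every positive integer
`K`, because `(K - M) * (K - M - 1) ≥ 0` for integers. With `M = ⌊γ / α⌋`, applying this to each
term of the objective bounds it below by an affine combination of the two constraint values
`∑ x k = α` and `∑ k * x k = γ`, which is the claimed value. Equality holds for the feasible
point that splits the mass `α` between `k = M` and `k = M + 1`, where the secant is exact.
-/

open Finset

theorem one_div_add_one_div_sub_le_one_div {K M : ℕ} (hK : 0 < K) (hM : 0 < M) :
    1 / (M : ℝ) + 1 / (M + 1) - K / (M * (M + 1)) ≤ 1 / K := by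
  have hKM : 0 ≤ ((K : ℝ) - M) * (K - M - 1) := by
    rcases le_or_gt K M with h | h
    · have h' : (K : ℝ) ≤ M := by exact_mod_cast h
      nlinarith
    · have h' : (M : ℝ) + 1 ≤ K := by exact_mod_cast h
      nlinarith
  have hK' : (0 : ℝ) < K := by exact_mod_cast hK
  have hM' : (0 : ℝ) < M := by exact_mod_cast hM
  rw [← sub_nonneg]
  have key : 1 / (K : ℝ) - (1 / M + 1 / (M + 1) - K / (M * (M + 1)))
      = (K - M) * (K - M - 1) / (K * (M * (M + 1))) := by
    field_simp
    ring
  rw [key]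
  exact div_nonneg hKM (by positivity)

theorem le_sum_div_natCast {ι : Type*} (s : Finset ι) (n : ι → ℕ) (hn : ∀ i ∈ s, 0 < n i)
    (x : ι → ℝ) (hx : ∀ i ∈ s, 0 ≤ x i) {M : ℕ} (hM : 0 < M) :
    (1 / (M : ℝ) + 1 / (M + 1)) * ∑ i ∈ s, x i - (∑ i ∈ s, (n i : ℝ) * x i) / (M * (M + 1))
      ≤ ∑ i ∈ s, x i / n i := by
  rw [mul_sum, sum_div, ← sum_sub_distrib]
  refine sum_le_sum fun i hi => ?_
  calc (1 / (M : ℝ) + 1 / (M + 1)) * x i - n i * x i / (M * (M + 1))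
      = (1 / (M : ℝ) + 1 / (M + 1) - n i / (M * (M + 1))) * x i := by ring
    _ ≤ 1 / n i * x i :=
        mul_le_mul_of_nonneg_right (one_div_add_one_div_sub_le_one_div (hn i hi) hM) (hx i hi)
    _ = x i / n i := one_div_mul_eq_div _ _

theorem exists_nonneg_fin_two_point_sum_mul {N M : ℕ} (hM : 1 ≤ M) (hMN : M ≤ N) {A B : ℝ}
    (hA : 0 ≤ A) (hB : 0 ≤ B) (hBN : M < N ∨ B = 0) :
    ∃ x : Fin N → ℝ, (∀ k, 0 ≤ x k) ∧
      ∀ g : ℝ → ℝ, ∑ k : Fin N, g ((k : ℕ) + 1) * x k = g M * A + g (M + 1) * B := by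
  refine ⟨fun k => (if (k : ℕ) + 1 = M then A else 0) + (if (k : ℕ) + 1 = M + 1 then B else 0),
    fun k => by positivity, fun g => ?_⟩
  let f : ℕ → ℝ := fun j => g j * ((if j = M then A else 0) + (if j = M + 1 then B else 0))
  calc _ = ∑ i ∈ range N, f (i + 1) := by
        rw [← Fin.sum_univ_eq_sum_range]; simp only [f, Nat.cast_add_one]
    _ = ∑ j ∈ Ico 1 (N + 1), f j := by rw [range_eq_Ico, sum_Ico_add']
    _ = g M * A + g (M + 1) * B := by
      simp only [f, mul_add, sum_add_distrib, mul_ite, mul_zero, sum_ite_eq', mem_Ico]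
      rcases hBN with h | h <;> simp [*]

theorem kat_lp_value_general (N : ℕ) (α γ : ℝ)
    (hα : 0 < α) (h1 : α ≤ γ) (h2 : γ ≤ (N : ℝ) * α) :
    IsLeast {v : ℝ | ∃ x : Fin N → ℝ, (∀ k, 0 ≤ x k) ∧
        (∑ k : Fin N, x k = α) ∧
        (∑ k : Fin N, (((k : ℕ) : ℝ) + 1) * x k = γ) ∧
        v = ∑ k : Fin N, x k / (((k : ℕ) : ℝ) + 1)}
      ((1 / (⌊γ / α⌋ : ℝ) -
        (γ / α - (⌊γ / α⌋ : ℝ)) / ((1 + (⌊γ / α⌋ : ℝ)) * (⌊γ / α⌋ : ℝ))) * α) := by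
  set t := γ / α
  have ht1 : 1 ≤ t := (one_le_div hα).mpr h1
  have htN : t ≤ N := (div_le_iff₀ hα).mpr (by linarith)
  have hγ : γ = t * α := (div_mul_cancel₀ γ hα.ne').symm
  set M := ⌊t⌋₊
  have hM1 : 1 ≤ M := Nat.le_floor (by simpa using ht1)
  have hMN : M ≤ N := Nat.floor_le_of_le htN
  have hMt : (M : ℝ) ≤ t := Nat.floor_le (by linarith)
  have htM : t < M + 1 := Nat.lt_floor_add_one t
  have hM0 : (0 : ℝ) < M := by exact_mod_cast hM1
  have value : (1 / (M : ℝ) - (t - M) / ((1 + M) * M)) * α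
      = (1 / (M : ℝ) + 1 / (M + 1)) * α - γ / (M * (M + 1)) := by
    rw [hγ]; field_simp; ring
  rw [← natCast_floor_eq_intCast_floor (by linarith), value]
  constructor
  · have hBN : M < N ∨ (t - M) * α = 0 := by
      rcases hMN.lt_or_eq with h | h
      · exact .inl h
      · right; rw [← h] at htN; rw [le_antisymm htN hMt]; ring
    obtain ⟨x, hx0, hx⟩ := exists_nonneg_fin_two_point_sum_mul hM1 hMN
      (A := (M + 1 - t) * α) (B := (t - M) * α) (by nlinarith) (by nlinarith) hBN
    refine ⟨x, hx0, ?_, ?_, ?_⟩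
    · simpa using (hx fun _ => 1).trans (by ring)
    · simpa using (hx fun K => K).trans (by rw [hγ]; ring)
    · simp_rw [div_eq_inv_mul]
      rw [hx fun K => K⁻¹, hγ]
      field_simp
      ring
  · rintro v ⟨x, hx0, hsum, hmoment, rfl⟩
    have := le_sum_div_natCast univ (fun k : Fin N => (k : ℕ) + 1) (fun _ _ => Nat.succ_pos _) x
      (fun k _ => hx0 k) (M := M) (by omega)
    push_cast at this
    rwa [hsum, hmoment] at this

/-- Value of the single-index KAT linear program: the minimum of `∑ k, x k / k` subject to
`x k ≥ 0`, `∑ k, x k = α`, `∑ k, k * x k = γ` (with `k` ranging over `1,…,N`, here encoded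
as `k = i + 1` for `i : Fin N`) is attained and equals the KAT expression. -/
theorem kat_lp_value (N : ℕ) (hN : 1 ≤ N) (α γ : ℝ)
    (hα : 0 < α) (h1 : α ≤ γ) (h2 : γ ≤ (N : ℝ) * α) :
    IsLeast {v : ℝ | ∃ x : Fin N → ℝ, (∀ k, 0 ≤ x k) ∧
        (∑ k : Fin N, x k = α) ∧
        (∑ k : Fin N, (((k : ℕ) : ℝ) + 1) * x k = γ) ∧
        v = ∑ k : Fin N, x k / (((k : ℕ) : ℝ) + 1)}
      ((1 / (⌊γ / α⌋ : ℝ) -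
        (γ / α - (⌊γ / α⌋ : ℝ)) / ((1 + (⌊γ / α⌋ : ℝ)) * (⌊γ / α⌋ : ℝ))) * α) :=
  kat_lp_value_general N α γ hα h1 h2
end

section
/- (Uniqueness of the KAT LP optimum) Let N ≥ 1 and let α, γ be real numbers with α > 0 and α ≤ γ ≤ N·α. Consider the feasible set F of all (x_1,…,x_N) with x_k ≥ 0 for all k, Σ_{k=1}^N x_k = α, and Σ_{k=1}^N k·x_k = γ. If x ∈ F and y ∈ F both minimize Σ_{k=1}^N x_k/k over F, then x = y. -/
/-!
Write `t ↦ 1/t` as its chord through `d` and `d + 1` plus the gap `1/t - chord(t)`. On a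
feasible point the chord part of the objective is fixed by the two linear constraints, so the
objective is a constant plus `∑ x_k · gap(k)`. If `d ≤ γ/α ≤ d + 1`, the gap is nonnegative at
every positive integer and vanishes only at `d` and `d + 1`, while the point supported on
`{d, d + 1}` is feasible and makes the second sum zero. Hence every minimizer is supported on
`{d, d + 1}`, where the two constraints fix it.
-/

open Finset

/-- `(2d + 1 - t) / (d (d + 1))` is the chord of `t ↦ 1/t` through `t = d` and `t = d + 1`. -/
noncomputable def invChordGap (d t : ℝ) : ℝ := 1 / t - (2 * d + 1 - t) / (d * (d + 1))

lemma invChordGap_eq {d t : ℝ} (hd : 0 < d) (ht : 0 < t) :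
    invChordGap d t = (t - d) * (t - (d + 1)) / (t * (d * (d + 1))) := by
  unfold invChordGap
  field_simp
  ring

lemma invChordGap_nonneg {d t : ℝ} (hd : 0 < d) (ht : 0 < t) (h : t ≤ d ∨ d + 1 ≤ t) :
    0 ≤ invChordGap d t := by
  rw [invChordGap_eq hd ht]
  refine div_nonneg ?_ (by positivity)
  rcases h with h | h <;> nlinarith

lemma invChordGap_pos {d t : ℝ} (hd : 0 < d) (ht : 0 < t) (h : t < d ∨ d + 1 < t) :
    0 < invChordGap d t := by
  rw [invChordGap_eq hd ht]
  refine div_pos ?_ (by positivity)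
  rcases h with h | h <;> nlinarith

lemma exists_nat_bracket {s : ℝ} {N : ℕ} (hN : 2 ≤ N) (h1 : 1 ≤ s) (h2 : s ≤ N) :
    ∃ d : ℕ, 1 ≤ d ∧ d < N ∧ (d : ℝ) ≤ s ∧ s ≤ d + 1 := by
  have hfloor : 1 ≤ ⌊s⌋₊ := Nat.le_floor (by exact_mod_cast h1)
  refine ⟨min ⌊s⌋₊ (N - 1), by omega, by omega, ?_, ?_⟩
  · exact (Nat.cast_le.2 (min_le_left _ _)).trans (Nat.floor_le (by linarith))
  · rcases le_total ⌊s⌋₊ (N - 1) with h | h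
    · rw [min_eq_left h]
      exact (Nat.lt_floor_add_one s).le
    · rw [min_eq_right h, Nat.cast_sub (by omega)]
      push_cast
      linarith

section MomentProgram

variable {ι : Type*} [Fintype ι]

structure Feasible (t : ι → ℝ) (α γ : ℝ) (z : ι → ℝ) : Prop where
  nonneg : ∀ k, 0 ≤ z k
  sum_eq : ∑ k, z k = α
  sum_mul_eq : ∑ k, t k * z k = γ

variable {t : ι → ℝ} {α γ d : ℝ}

lemma sum_div_eq_add_sum_mul_invChordGap {z : ι → ℝ} (h1 : ∑ k, z k = α)
    (h2 : ∑ k, t k * z k = γ) (d : ℝ) :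
    ∑ k, z k / t k =
      ((2 * d + 1) * α - γ) / (d * (d + 1)) + ∑ k, z k * invChordGap d (t k) := by
  have hterm : ∀ k, z k * invChordGap d (t k) =
      z k / t k - ((2 * d + 1) * z k - t k * z k) / (d * (d + 1)) := fun k => by
    unfold invChordGap
    ring
  simp only [hterm, sum_sub_distrib, ← sum_div, ← mul_sum, h1, h2]
  ring

lemma eq_zero_of_sum_div_le (hd : 0 < d) (ht : ∀ k, 0 < t k)
    (hgap : ∀ k, t k ≤ d ∨ d + 1 ≤ t k) {z : ι → ℝ} (hz : Feasible t α γ z)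
    (hle : ∑ k, z k / t k ≤ ((2 * d + 1) * α - γ) / (d * (d + 1)))
    {k : ι} (hkd : t k ≠ d) (hkd' : t k ≠ d + 1) : z k = 0 := by
  have hnonneg : ∀ k ∈ univ, 0 ≤ z k * invChordGap d (t k) := fun k _ =>
    mul_nonneg (hz.nonneg k) (invChordGap_nonneg hd (ht k) (hgap k))
  have hsum : ∑ k, z k * invChordGap d (t k) = 0 :=
    le_antisymm (by linarith [sum_div_eq_add_sum_mul_invChordGap hz.sum_eq hz.sum_mul_eq d])
      (sum_nonneg hnonneg)
  have hpos : 0 < invChordGap d (t k) := invChordGap_pos hd (ht k) <| by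
    rcases hgap k with h | h
    exacts [.inl (lt_of_le_of_ne h hkd), .inr (lt_of_le_of_ne h (Ne.symm hkd'))]
  exact (mul_eq_zero.1 ((sum_eq_zero_iff_of_nonneg hnonneg).1 hsum k (mem_univ k))).resolve_right
    hpos.ne'

variable [DecidableEq ι]

/-- The values solve both constraints for a point supported on `{i, j}`, where `t i = d` and
`t j = d + 1`. -/
noncomputable def twoPoint (i j : ι) (d α γ : ℝ) : ι → ℝ :=
  Pi.single i ((d + 1) * α - γ) + Pi.single j (γ - d * α)

variable {i j : ι}

lemma feasible_twoPoint (hi : t i = d) (hj : t j = d + 1) (hlo : d * α ≤ γ)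
    (hhi : γ ≤ (d + 1) * α) : Feasible t α γ (twoPoint i j d α γ) := by
  refine ⟨fun k => ?_, ?_, ?_⟩
  · simp only [twoPoint, Pi.add_apply, Pi.single_apply]
    split_ifs <;> linarith
  · simp only [twoPoint, Pi.add_apply, sum_add_distrib, sum_pi_single', mem_univ, if_true]
    ring
  · simp only [twoPoint, Pi.add_apply, Pi.single_apply, mul_add, mul_ite, mul_zero, sum_add_distrib,
      sum_ite_eq', mem_univ, if_true, hi, hj]
    ring

lemma sum_div_twoPoint (ht : ∀ k, 0 < t k) (hi : t i = d) (hj : t j = d + 1) :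
    ∑ k, twoPoint i j d α γ k / t k = ((2 * d + 1) * α - γ) / (d * (d + 1)) := by
  have hd : 0 < d := hi ▸ ht i
  simp only [twoPoint, Pi.add_apply, add_div, sum_add_distrib, Pi.single_apply, ite_div, zero_div,
    sum_ite_eq', mem_univ, if_true, hi, hj]
  field_simp
  ring

lemma eq_twoPoint_of_eq_zero (hi : t i = d) (hj : t j = d + 1) {z : ι → ℝ}
    (hz : Feasible t α γ z) (hoff : ∀ k, k ≠ i ∧ k ≠ j → z k = 0) : z = twoPoint i j d α γ := by
  have hij : i ≠ j := fun h => by simp [h, hj] at hi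
  have h1 : z i + z j = α := by
    rw [← hz.sum_eq, Fintype.sum_eq_add i j hij hoff]
  have h2 : d * z i + (d + 1) * z j = γ := by
    rw [← hz.sum_mul_eq, Fintype.sum_eq_add i j hij fun k hk => by rw [hoff k hk, mul_zero], hi, hj]
  funext k
  by_cases hki : k = i
  · subst hki
    simp only [twoPoint, Pi.add_apply, Pi.single_eq_same, Pi.single_eq_of_ne hij, add_zero]
    linear_combination (d + 1) * h1 - h2
  by_cases hkj : k = j
  · subst hkj
    simp only [twoPoint, Pi.add_apply, Pi.single_eq_of_ne hki, Pi.single_eq_same, zero_add]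
    linear_combination h2 - d * h1
  simp [twoPoint, hki, hkj, hoff k ⟨hki, hkj⟩]

theorem eq_twoPoint_of_isMin (ht : ∀ k, 0 < t k) (ht_inj : Function.Injective t)
    (hgap : ∀ k, t k ≤ d ∨ d + 1 ≤ t k) (hi : t i = d) (hj : t j = d + 1)
    (hlo : d * α ≤ γ) (hhi : γ ≤ (d + 1) * α) {z : ι → ℝ} (hz : Feasible t α γ z)
    (hmin : ∀ w, Feasible t α γ w → ∑ k, z k / t k ≤ ∑ k, w k / t k) :
    z = twoPoint i j d α γ := by
  have hle := (hmin _ (feasible_twoPoint hi hj hlo hhi)).trans (sum_div_twoPoint ht hi hj).le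
  refine eq_twoPoint_of_eq_zero hi hj hz fun k ⟨hki, hkj⟩ => ?_
  exact eq_zero_of_sum_div_le (hi ▸ ht i) ht hgap hz hle (fun h => hki (ht_inj (h.trans hi.symm)))
    (fun h => hkj (ht_inj (h.trans hj.symm)))

end MomentProgram

/-- Uniqueness of the optimal feasible point of the single-index KAT linear program. -/
theorem kat_lp_unique (N : ℕ) (hN : 1 ≤ N) (α γ : ℝ)
    (hα : 0 < α) (h1 : α ≤ γ) (h2 : γ ≤ (N : ℝ) * α)
    (x y : Fin N → ℝ)
    (hx0 : ∀ k, 0 ≤ x k) (hx1 : ∑ k : Fin N, x k = α)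
    (hx2 : ∑ k : Fin N, (((k : ℕ) : ℝ) + 1) * x k = γ)
    (hy0 : ∀ k, 0 ≤ y k) (hy1 : ∑ k : Fin N, y k = α)
    (hy2 : ∑ k : Fin N, (((k : ℕ) : ℝ) + 1) * y k = γ)
    (hxmin : ∀ z : Fin N → ℝ, (∀ k, 0 ≤ z k) → (∑ k : Fin N, z k = α) →
      (∑ k : Fin N, (((k : ℕ) : ℝ) + 1) * z k = γ) →
      ∑ k : Fin N, x k / (((k : ℕ) : ℝ) + 1) ≤ ∑ k : Fin N, z k / (((k : ℕ) : ℝ) + 1))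
    (hymin : ∀ z : Fin N → ℝ, (∀ k, 0 ≤ z k) → (∑ k : Fin N, z k = α) →
      (∑ k : Fin N, (((k : ℕ) : ℝ) + 1) * z k = γ) →
      ∑ k : Fin N, y k / (((k : ℕ) : ℝ) + 1) ≤ ∑ k : Fin N, z k / (((k : ℕ) : ℝ) + 1)) :
    x = y := by
  obtain rfl | hN2 := hN.eq_or_lt
  · funext k
    rw [Subsingleton.elim k 0]
    simp only [Fin.sum_univ_one] at hx1 hy1
    rw [hx1, hy1]
  obtain ⟨d, hd1, hdN, hlo, hhi⟩ := exists_nat_bracket hN2 ((le_div_iff₀ hα).2 (by linarith))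
    ((div_le_iff₀ hα).2 h2)
  set t : Fin N → ℝ := fun k => ((k : ℕ) : ℝ) + 1
  have ht : ∀ k, 0 < t k := fun k => by positivity
  have ht_inj : Function.Injective t := fun k l h => Fin.ext (by exact_mod_cast add_right_cancel h)
  have hgap : ∀ k, t k ≤ d ∨ (d : ℝ) + 1 ≤ t k := fun k => by
    simp only [t]
    rcases Nat.lt_or_ge (k : ℕ) d with h | h
    exacts [.inl (by exact_mod_cast Nat.succ_le_of_lt h),
      .inr (by exact_mod_cast Nat.succ_le_succ h)]
  have hi : t ⟨d - 1, by omega⟩ = d := by simp only [t]; rw [Nat.cast_sub hd1]; ring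
  have hj : t ⟨d, hdN⟩ = (d : ℝ) + 1 := rfl
  have hunique := fun z hz hmin => eq_twoPoint_of_isMin ht ht_inj hgap hi hj
    ((le_div_iff₀ hα).1 hlo) ((div_le_iff₀ hα).1 hhi) (z := z) hz hmin
  rw [hunique x ⟨hx0, hx1, hx2⟩ fun w hw => hxmin w hw.nonneg hw.sum_eq hw.sum_mul_eq,
    hunique y ⟨hy0, hy1, hy2⟩ fun w hw => hymin w hw.nonneg hw.sum_eq hw.sum_mul_eq]
end

section
/- Let N ≥ 2 and let α, γ be real numbers with α > 0 and α ≤ γ < N·α. Define f : ℝ → ℝ by f(x) = ((2·χ(t(x)) + 1)/(χ(t(x))·(χ(t(x)) + 1)))·(α − x) − (1/(χ(t(x))·(χ(t(x)) + 1)))·(γ − N·x) + x/N, where t(x) = (γ − N·x)/(α − x). Then f is convex on the interval [max(0, γ − (N−1)·α), (γ − α)/(N−1)]. -/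
theorem ConvexOn.of_isGreatest_image {𝕜 E β ι : Type*} [Semiring 𝕜] [PartialOrder 𝕜]
    [AddCommMonoid E] [SMul 𝕜 E] [AddCommMonoid β] [PartialOrder β] [IsOrderedAddMonoid β]
    [Module 𝕜 β] [PosSMulMono 𝕜 β] {D : Set E} {f : E → β} {s : Set ι} {L : ι → E → β}
    (hD : Convex 𝕜 D) (hL : ∀ i ∈ s, ConvexOn 𝕜 D (L i))
    (hf : ∀ x ∈ D, IsGreatest ((L · x) '' s) (f x)) : ConvexOn 𝕜 D f := by
  refine ⟨hD, fun x hx y hy a b ha hb hab => ?_⟩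
  obtain ⟨i, hi, hfi⟩ := (hf _ (hD hx hy ha hb hab)).1
  rw [← hfi]
  calc L i (a • x + b • y) ≤ a • L i x + b • L i y := (hL i hi).2 hx hy ha hb hab
    _ ≤ a • f x + b • f y := by
      gcongr
      · exact (hf x hx).2 ⟨i, hi, rfl⟩
      · exact (hf y hy).2 ⟨i, hi, rfl⟩

lemma exists_chi_eq {t : ℝ} (ht : 1 ≤ t) :
    ∃ k : ℤ, 1 ≤ k ∧ chi t = k ∧ (k : ℝ) ≤ t ∧ t ≤ k + 1 := by
  unfold chi
  split_ifs with h
  · obtain ⟨⟨n, rfl⟩, hn⟩ := h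
    have hn' : (2 : ℤ) ≤ n := by exact_mod_cast hn
    exact ⟨n - 1, by omega, by push_cast; ring, by push_cast; linarith, by push_cast; linarith⟩
  · exact ⟨⌊t⌋, Int.le_floor.mpr (by exact_mod_cast ht), rfl, Int.floor_le t,
      (Int.lt_floor_add_one t).le⟩

noncomputable def chord (k t : ℝ) : ℝ := (2 * k + 1 - t) / (k * (k + 1))

lemma chord_eq_inv_sub {k t : ℝ} (hk : 0 < k) (ht : t ≠ 0) :
    chord k t = t⁻¹ - (t - k) * (t - (k + 1)) / (k * (k + 1) * t) := by
  unfold chord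
  field_simp
  ring

lemma chord_le_chord {j k : ℤ} {t : ℝ} (hj : 1 ≤ j) (hk : 1 ≤ k) (hkt : (k : ℝ) ≤ t)
    (htk : t ≤ k + 1) : chord j t ≤ chord k t := by
  obtain rfl | hjk := eq_or_ne j k
  · exact le_rfl
  have hj' : (1 : ℝ) ≤ j := by exact_mod_cast hj
  have hk' : (1 : ℝ) ≤ k := by exact_mod_cast hk
  have ht : 0 < t := by linarith
  rw [chord_eq_inv_sub (by linarith) ht.ne', chord_eq_inv_sub (by linarith) ht.ne']
  have hk_in : (t - k) * (t - (k + 1)) / (k * (k + 1) * t) ≤ 0 :=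
    div_nonpos_of_nonpos_of_nonneg
      (mul_nonpos_of_nonneg_of_nonpos (by linarith) (by linarith)) (by positivity)
  have hj_out : 0 ≤ (t - j) * (t - (j + 1)) / (j * (j + 1) * t) := by
    refine div_nonneg ?_ (by positivity)
    rcases hjk.lt_or_gt with hjk | hjk
    · have : (j : ℝ) + 1 ≤ k := by exact_mod_cast hjk
      exact mul_nonneg (by linarith) (by linarith)
    · have : (k : ℝ) + 1 ≤ j := by exact_mod_cast hjk
      exact mul_nonneg_of_nonpos_of_nonpos (by linarith) (by linarith)
  linarith

noncomputable def piece (N α γ k x : ℝ) : ℝ :=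
  (2 * k + 1) / (k * (k + 1)) * (α - x) - 1 / (k * (k + 1)) * (γ - N * x) + x / N

lemma convexOn_piece (N α γ k : ℝ) {D : Set ℝ} (hD : Convex ℝ D) :
    ConvexOn ℝ D (piece N α γ k) := by
  refine ⟨hD, fun x _ y _ a b _ _ hab => le_of_eq ?_⟩
  simp only [piece, smul_eq_mul]
  linear_combination (1 / (k * (k + 1)) * γ - (2 * k + 1) / (k * (k + 1)) * α) * hab

lemma piece_eq_mul_chord (N α γ k : ℝ) {x : ℝ} (hx : α - x ≠ 0) :
    piece N α γ k x = (α - x) * chord k ((γ - N * x) / (α - x)) + x / N := by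
  unfold piece chord
  field_simp

lemma piece_le_piece (N α γ : ℝ) {j k : ℤ} {x : ℝ} (hj : 1 ≤ j) (hk : 1 ≤ k) (hx : x < α)
    (hkt : (k : ℝ) ≤ (γ - N * x) / (α - x)) (htk : (γ - N * x) / (α - x) ≤ k + 1) :
    piece N α γ j x ≤ piece N α γ k x := by
  have hαx : 0 < α - x := by linarith
  rw [piece_eq_mul_chord _ _ _ _ hαx.ne', piece_eq_mul_chord _ _ _ _ hαx.ne']
  gcongr
  exact chord_le_chord hj hk hkt htk

theorem f_convex_general (N : ℕ) (hN : 2 ≤ N) (α γ : ℝ)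
    (h2 : γ < (N : ℝ) * α)
    (t f : ℝ → ℝ)
    (ht : ∀ x, t x = (γ - (N : ℝ) * x) / (α - x))
    (hf : ∀ x, f x = ((2 * chi (t x) + 1) / (chi (t x) * (chi (t x) + 1))) * (α - x)
        - (1 / (chi (t x) * (chi (t x) + 1))) * (γ - (N : ℝ) * x) + x / (N : ℝ)) :
    ConvexOn ℝ (Set.Icc (max 0 (γ - ((N : ℝ) - 1) * α)) ((γ - α) / ((N : ℝ) - 1))) f := by
  have hN1 : (0 : ℝ) < N - 1 := by
    have : (2 : ℝ) ≤ N := by exact_mod_cast hN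
    linarith
  refine (ConvexOn.of_isGreatest_image (s := Set.Ici (1 : ℤ)) (L := fun k => piece N α γ k)
    (convex_Iic _) (fun k _ => convexOn_piece _ _ _ _ (convex_Iic _)) ?_).subset
    Set.Icc_subset_Iic_self (convex_Icc _ _)
  intro x hx
  have hx' : (N - 1) * x ≤ γ - α := by rw [Set.mem_Iic, le_div_iff₀ hN1] at hx; linarith
  have hxα : x < α := by nlinarith
  have ht1 : 1 ≤ t x := by rw [ht, le_div_iff₀ (by linarith)]; linarith
  obtain ⟨k, hk, hchi, hkt, htk⟩ := exists_chi_eq ht1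
  have hfx : f x = piece N α γ k x := by rw [hf, hchi, piece]
  refine ⟨⟨k, hk, hfx.symm⟩, ?_⟩
  rintro _ ⟨j, hj, rfl⟩
  rw [hfx]
  exact piece_le_piece _ _ _ hj hk hxα (ht x ▸ hkt) (ht x ▸ htk)

/-- The function `f i` of the proof of Theorem 2 is convex on
the interval `[max(0, γ − (N−1)α), (γ − α)/(N−1)]`. -/
theorem f_convex (N : ℕ) (hN : 2 ≤ N) (α γ : ℝ)
    (hα : 0 < α) (h1 : α ≤ γ) (h2 : γ < (N : ℝ) * α)
    (t f : ℝ → ℝ)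
    (ht : ∀ x, t x = (γ - (N : ℝ) * x) / (α - x))
    (hf : ∀ x, f x = ((2 * chi (t x) + 1) / (chi (t x) * (chi (t x) + 1))) * (α - x)
        - (1 / (chi (t x) * (chi (t x) + 1))) * (γ - (N : ℝ) * x) + x / (N : ℝ)) :
    ConvexOn ℝ (Set.Icc (max 0 (γ - ((N : ℝ) - 1) * α)) ((γ - α) / ((N : ℝ) - 1))) f :=
  f_convex_general N hN α γ h2 t f ht hf
end

section
/- (Tightness of the Dawson–Sankoff LP relaxation) Let N ≥ 1 and let S_1, S_2 be real numbers. Then the infimum of Σ_{i=1}^N Σ_{k=1}^N a_i(k)/k over all real numbers a_i(k) ≥ 0 (i, k ∈ {1,…,N}) satisfying Σ_{i=1}^N Σ_{k=1}^N a_i(k) = S_1, Σ_{i=1}^N Σ_{k=1}^N k·a_i(k) = S_2, and Σ_{i=1}^N a_i(k) ≥ k·a_j(k) for all j, k ∈ {1,…,N}, is equal to the infimum of Σ_{k=1}^N a(k)/k over all real numbers a(k) ≥ 0 (k ∈ {1,…,N}) satisfying Σ_{k=1}^N a(k) = S_1 and Σ_{k=1}^N k·a(k) = S_2. -/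
/-!
Both programs have the same feasible values. Summing a disaggregated solution over `i` gives
an aggregated solution with the same three linear functionals (exchange the order of summation).
Conversely, splitting an aggregated solution evenly, `a i k := a k / N`, is feasible: it sums back
to `a`, and the achievability constraint `N · (a k / N) ≥ k · (a k / N)` holds because `k ≤ N`.
-/

open Finset

namespace DawsonSankoff

variable {ι : Type*} [Fintype ι]

def aggregate (a : ι → ℕ → ℝ) (k : ℕ) : ℝ :=
  ∑ i, a i k

noncomputable def splitEvenly (a : ℕ → ℝ) (_ : ι) (k : ℕ) : ℝ :=
  a k / Fintype.card ι

theorem sum_sum_mul_eq_sum_mul_aggregate (s : Finset ℕ) (w : ℕ → ℝ) (a : ι → ℕ → ℝ) :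
    ∑ i, ∑ k ∈ s, w k * a i k = ∑ k ∈ s, w k * aggregate a k := by
  rw [sum_comm]
  simp only [aggregate, mul_sum]

theorem aggregate_nonneg {s : Finset ℕ} {a : ι → ℕ → ℝ} (ha : ∀ i, ∀ k ∈ s, 0 ≤ a i k) :
    ∀ k ∈ s, 0 ≤ aggregate a k :=
  fun k hk => sum_nonneg fun i _ => ha i k hk

theorem aggregate_splitEvenly [Nonempty ι] (a : ℕ → ℝ) :
    aggregate (splitEvenly a : ι → ℕ → ℝ) = a := by
  ext k
  simp only [aggregate, splitEvenly, sum_const, card_univ, nsmul_eq_mul]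
  exact mul_div_cancel₀ _ (Nat.cast_ne_zero.mpr Fintype.card_ne_zero)

theorem splitEvenly_nonneg {s : Finset ℕ} {a : ℕ → ℝ} (ha : ∀ k ∈ s, 0 ≤ a k) (i : ι) :
    ∀ k ∈ s, 0 ≤ splitEvenly a i k :=
  fun k hk => div_nonneg (ha k hk) (Nat.cast_nonneg _)

theorem mul_splitEvenly_le_aggregate [Nonempty ι] {a : ℕ → ℝ} {k : ℕ} (ha : 0 ≤ a k)
    (hk : k ≤ Fintype.card ι) (j : ι) :
    (k : ℝ) * splitEvenly a j k ≤ aggregate (splitEvenly a : ι → ℕ → ℝ) k := by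
  rw [aggregate_splitEvenly, splitEvenly, mul_div_left_comm]
  have hcard : (0 : ℝ) < Fintype.card ι := Nat.cast_pos.mpr Fintype.card_pos
  exact mul_le_of_le_one_right ha ((div_le_one hcard).mpr (by exact_mod_cast hk))

end DawsonSankoff

open DawsonSankoff

/-- Tightness of the Dawson–Sankoff LP relaxation: the LP over the `a i k` with the
achievability constraints has the same infimum as the aggregated LP over the `a k`. -/
theorem ds_lp_relaxation_tight (N : ℕ) (hN : 1 ≤ N) (S1 S2 : ℝ) :
    sInf {v : ℝ | ∃ a : Fin N → ℕ → ℝ,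
        (∀ i : Fin N, ∀ k ∈ Finset.Icc 1 N, 0 ≤ a i k) ∧
        (∑ i : Fin N, ∑ k ∈ Finset.Icc 1 N, a i k = S1) ∧
        (∑ i : Fin N, ∑ k ∈ Finset.Icc 1 N, (k : ℝ) * a i k = S2) ∧
        (∀ j : Fin N, ∀ k ∈ Finset.Icc 1 N, ∑ i : Fin N, a i k ≥ (k : ℝ) * a j k) ∧
        v = ∑ i : Fin N, ∑ k ∈ Finset.Icc 1 N, a i k / (k : ℝ)} =
    sInf {v : ℝ | ∃ a : ℕ → ℝ,
        (∀ k ∈ Finset.Icc 1 N, 0 ≤ a k) ∧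
        (∑ k ∈ Finset.Icc 1 N, a k = S1) ∧
        (∑ k ∈ Finset.Icc 1 N, (k : ℝ) * a k = S2) ∧
        v = ∑ k ∈ Finset.Icc 1 N, a k / (k : ℝ)} := by
  have hsum (a : Fin N → ℕ → ℝ) (w : ℕ → ℝ) :=
    sum_sum_mul_eq_sum_mul_aggregate (Icc 1 N) w a
  congr 1
  ext v
  constructor
  · rintro ⟨a, ha, h1, h2, -, rfl⟩
    refine ⟨aggregate a, aggregate_nonneg ha, ?_, ?_, ?_⟩
    · simpa [← h1] using (hsum a 1).symm
    · exact (hsum a Nat.cast).symm.trans h2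
    · simpa [div_eq_inv_mul] using hsum a fun k => (k : ℝ)⁻¹
  · rintro ⟨a, ha, h1, h2, rfl⟩
    have : Nonempty (Fin N) := ⟨⟨0, hN⟩⟩
    refine ⟨splitEvenly a, splitEvenly_nonneg ha, ?_, ?_, ?_, ?_⟩
    · simpa [aggregate_splitEvenly, h1] using hsum (splitEvenly a) 1
    · rw [hsum, aggregate_splitEvenly, h2]
    · exact fun j k hk => mul_splitEvenly_le_aggregate (ha k hk)
        (by simpa using (mem_Icc.mp hk).2) j
    · simpa [aggregate_splitEvenly, div_eq_inv_mul] using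
        (hsum (splitEvenly a) fun k => (k : ℝ)⁻¹).symm
end
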